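/- Let f: ℝᵈ → ℝ be convex and L-smooth with minimizer w*. Consider the iteration w₀ = 0, wₖ₊₁ = wₖ - gₖ/(2L) where each gₖ satisfies ‖gₖ - ∇f(wₖ)‖ ≤ ε and ‖gₖ‖ ≥ 4ε for k = 0, ..., K-1. Suppose additionally that f(wₖ) - f(w*) ≥ ε‖w*‖ for all k ∈ [1, K]. Then ‖wₖ - w*‖ ≤ ‖w*‖ for all k ∈ [0, K]. -/

import Mathlib

/-! An inexact step `x' = x - g/(2L)` with `‖g - ∇f x‖ ≤ ε ≤ ‖g‖/4` still decreases `f` by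
`‖g‖²/(4L)` (descent lemma), while convexity makes `⟪g, x - z⟫` at least
`f x - f z - ε‖x - z‖`. Expanding `‖x' - z‖²` and combining the two gives
`‖x' - z‖² - ‖x - z‖² ≤ (f z - f x' + ε‖x - z‖)/L`; with `z = w*`, induction on `k` and the
gap hypothesis make the right-hand side nonpositive. -/

open Set

variable {F : Type*} [NormedAddCommGroup F] [InnerProductSpace ℝ F] [CompleteSpace F]
  {f : F → ℝ}

theorem HasGradientAt.hasDerivAt_comp_add_smul {x v : F} {t : ℝ} {g : F}
    (hg : HasGradientAt f g (x + t • v)) :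
    HasDerivAt (fun s : ℝ => f (x + s • v)) (inner ℝ g v) t := by
  have hline : HasDerivAt (fun s : ℝ => x + s • v) v t := by
    simpa using ((hasDerivAt_id t).smul_const v).const_add x
  have h := hg.hasFDerivAt.comp_hasDerivAt t hline
  simp only [InnerProductSpace.toDual_apply_apply] at h
  exact h

theorem ConvexOn.add_inner_gradient_le (hconv : ConvexOn ℝ univ f) {x g : F}
    (hg : HasGradientAt f g x) (y : F) :
    f x + inner ℝ g (y - x) ≤ f y := by
  have hline : ConvexOn ℝ univ fun t : ℝ => f (x + t • (y - x)) := by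
    simpa [Function.comp_def, AffineMap.lineMap_apply_module', add_comm] using
      hconv.comp_affineMap (AffineMap.lineMap x y : ℝ →ᵃ[ℝ] F)
  have hderiv := HasGradientAt.hasDerivAt_comp_add_smul (v := y - x) (t := 0) (by simpa using hg)
  have := hline.le_slope_of_hasDerivAt (mem_univ 0) (mem_univ 1) one_pos hderiv
  simp only [slope_def_field, one_smul, add_sub_cancel, zero_smul, add_zero, sub_zero,
    div_one] at this
  linarith

theorem le_add_inner_add_sq_of_lipschitz_gradient {f' : F → F}
    (hf' : ∀ x, HasGradientAt f (f' x) x) {L : ℝ} (hsmooth : ∀ x y, ‖f' x - f' y‖ ≤ L * ‖x - y‖)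
    (x y : F) :
    f y ≤ f x + inner ℝ (f' x) (y - x) + L / 2 * ‖y - x‖ ^ 2 := by
  set v := y - x
  have key := image_le_of_deriv_right_le_deriv_boundary (a := 0) (b := 1)
    (f := fun t : ℝ => f (x + t • v)) (f' := fun t => inner ℝ (f' (x + t • v)) v)
    (B := fun t => f x + t * inner ℝ (f' x) v + L / 2 * t ^ 2 * ‖v‖ ^ 2)
    (B' := fun t => inner ℝ (f' x) v + L * t * ‖v‖ ^ 2) ?_ ?_ (by simp) ?_ ?_ ?_
    (right_mem_Icc.2 zero_le_one)
  · simpa [v] using key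
  · exact fun t _ => (hf' _).hasDerivAt_comp_add_smul.continuousAt.continuousWithinAt
  · exact fun t _ => (hf' _).hasDerivAt_comp_add_smul.hasDerivWithinAt
  · fun_prop
  · intro t _
    have hB : HasDerivAt (fun s : ℝ => f x + s * inner ℝ (f' x) v + L / 2 * s ^ 2 * ‖v‖ ^ 2)
        (1 * inner ℝ (f' x) v + L / 2 * (2 * t) * ‖v‖ ^ 2) t :=
      (((hasDerivAt_id' t).mul_const _).const_add _).add
        (((hasDerivAt_pow 2 t).const_mul _).mul_const _ |>.congr_deriv (by norm_num))
    exact (hB.congr_deriv (by ring)).hasDerivWithinAt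
  · intro t ht
    calc inner ℝ (f' (x + t • v)) v
        = inner ℝ (f' x) v + inner ℝ (f' (x + t • v) - f' x) v := by rw [inner_sub_left]; ring
      _ ≤ inner ℝ (f' x) v + ‖f' (x + t • v) - f' x‖ * ‖v‖ := by
          gcongr; exact real_inner_le_norm _ _
      _ ≤ inner ℝ (f' x) v + L * ‖t • v‖ * ‖v‖ := by
          gcongr; simpa using hsmooth (x + t • v) x
      _ = inner ℝ (f' x) v + L * t * ‖v‖ ^ 2 := by
          rw [norm_smul, Real.norm_of_nonneg ht.1]; ring

variable {f' : F → F} {L ε : ℝ}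

theorem apply_inexact_gradient_step_le (hf' : ∀ x, HasGradientAt f (f' x) x) (hL : 0 < L)
    (hsmooth : ∀ x y, ‖f' x - f' y‖ ≤ L * ‖x - y‖) {x g : F} (hg : ‖g - f' x‖ ≤ ε)
    (hgnorm : 4 * ε ≤ ‖g‖) :
    f (x - (1 / (2 * L)) • g) ≤ f x - ‖g‖ ^ 2 / (4 * L) := by
  have hdescent := le_add_inner_add_sq_of_lipschitz_gradient hf' hsmooth x (x - (1 / (2 * L)) • g)
  rw [sub_sub_cancel_left, inner_neg_right, real_inner_smul_right, norm_neg, norm_smul,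
    Real.norm_of_nonneg (by positivity)] at hdescent
  have hcorrelation : 3 / 4 * ‖g‖ ^ 2 ≤ inner ℝ (f' x) g := by
    have herr : inner ℝ (g - f' x) g ≤ ε * ‖g‖ :=
      (real_inner_le_norm _ _).trans (mul_le_mul_of_nonneg_right hg (norm_nonneg g))
    rw [inner_sub_left, real_inner_self_eq_norm_sq] at herr
    nlinarith [norm_nonneg g]
  calc f (x - (1 / (2 * L)) • g)
      ≤ f x - 1 / (2 * L) * inner ℝ (f' x) g + L / 2 * (1 / (2 * L) * ‖g‖) ^ 2 := by linarith
    _ ≤ f x - ‖g‖ ^ 2 / (4 * L) := by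
      field_simp
      linarith

theorem ConvexOn.sub_sub_le_inner_of_inexact_gradient (hconv : ConvexOn ℝ univ f) {x g g' : F}
    (hg' : HasGradientAt f g' x) (hg : ‖g - g'‖ ≤ ε) (z : F) :
    f x - f z - ε * ‖x - z‖ ≤ inner ℝ g (x - z) := by
  have hsupport := hconv.add_inner_gradient_le hg' z
  have herr : -(ε * ‖x - z‖) ≤ inner ℝ (g - g') (x - z) := by
    have := (abs_real_inner_le_norm (g - g') (x - z)).trans
      (mul_le_mul_of_nonneg_right hg (norm_nonneg _))
    linarith [neg_abs_le (inner ℝ (g - g') (x - z))]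
  rw [← neg_sub x z, inner_neg_right] at hsupport
  rw [inner_sub_left] at herr
  linarith

theorem norm_inexact_gradient_step_sub_sq_sub_le (hf' : ∀ x, HasGradientAt f (f' x) x)
    (hconv : ConvexOn ℝ univ f) (hL : 0 < L) (hsmooth : ∀ x y, ‖f' x - f' y‖ ≤ L * ‖x - y‖)
    {x g : F} (hg : ‖g - f' x‖ ≤ ε) (hgnorm : 4 * ε ≤ ‖g‖) (z : F) :
    ‖x - (1 / (2 * L)) • g - z‖ ^ 2 - ‖x - z‖ ^ 2
      ≤ (f z - f (x - (1 / (2 * L)) • g) + ε * ‖x - z‖) / L := by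
  have hdecrease := apply_inexact_gradient_step_le hf' hL hsmooth hg hgnorm
  have hcorrelation := hconv.sub_sub_le_inner_of_inexact_gradient (hf' x) hg z
  have hexpand : ‖x - (1 / (2 * L)) • g - z‖ ^ 2 - ‖x - z‖ ^ 2
      = (‖g‖ ^ 2 / (4 * L) - inner ℝ g (x - z)) / L := by
    rw [sub_right_comm, norm_sub_sq_real, real_inner_smul_right, norm_smul,
      Real.norm_of_nonneg (by positivity), real_inner_comm]
    field_simp
    ring
  rw [hexpand]
  gcongr
  linarith

theorem stmt_9_general {d : ℕ} (f : EuclideanSpace ℝ (Fin d) → ℝ)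
    (f' : EuclideanSpace ℝ (Fin d) → EuclideanSpace ℝ (Fin d))
    (hf' : ∀ x, HasGradientAt f (f' x) x)
    (hconv : ConvexOn ℝ Set.univ f)
    (L : ℝ) (hL : 0 < L)
    (hsmooth : ∀ x y, ‖f' x - f' y‖ ≤ L * ‖x - y‖)
    (wstar : EuclideanSpace ℝ (Fin d))
    (ε : ℝ) (hε : 0 ≤ ε) (K : ℕ)
    (w g : ℕ → EuclideanSpace ℝ (Fin d))
    (hw0 : w 0 = 0)
    (hstep : ∀ k < K, w (k + 1) = w k - (1 / (2 * L)) • g k)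
    (hg : ∀ k < K, ‖g k - f' (w k)‖ ≤ ε)
    (hgnorm : ∀ k < K, 4 * ε ≤ ‖g k‖)
    (hgap : ∀ k, 1 ≤ k → k ≤ K → ε * ‖wstar‖ ≤ f (w k) - f wstar) :
    ∀ k ≤ K, ‖w k - wstar‖ ≤ ‖wstar‖ := by
  intro k hk
  induction k with
  | zero => simp [hw0]
  | succ n ih =>
    have hn : n < K := hk
    have hprev := ih hn.le
    have hone_step := norm_inexact_gradient_step_sub_sq_sub_le hf' hconv hL hsmooth
      (hg n hn) (hgnorm n hn) wstar
    rw [← hstep n hn] at hone_step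
    have hgap_next := hgap (n + 1) (Nat.le_add_left 1 n) hk
    have hrhs : (f wstar - f (w (n + 1)) + ε * ‖w n - wstar‖) / L ≤ 0 :=
      div_nonpos_of_nonpos_of_nonneg
        (by linarith [mul_le_mul_of_nonneg_left hprev hε]) hL.le
    have hsq : ‖w (n + 1) - wstar‖ ^ 2 ≤ ‖w n - wstar‖ ^ 2 := by linarith
    exact ((pow_le_pow_iff_left₀ (norm_nonneg _) (norm_nonneg _) two_ne_zero).1 hsq).trans hprev

/-- If the approximate-gradient iterates keep a sub-optimality gap at least
`ε‖w*‖` during steps `1, ..., K`, then `‖wₖ - w*‖ ≤ ‖w*‖` for all `k ∈ [0, K]`. -/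
theorem stmt_9 {d : ℕ} (f : EuclideanSpace ℝ (Fin d) → ℝ)
    (f' : EuclideanSpace ℝ (Fin d) → EuclideanSpace ℝ (Fin d))
    (hf' : ∀ x, HasGradientAt f (f' x) x)
    (hconv : ConvexOn ℝ Set.univ f)
    (L : ℝ) (hL : 0 < L)
    (hsmooth : ∀ x y, ‖f' x - f' y‖ ≤ L * ‖x - y‖)
    (wstar : EuclideanSpace ℝ (Fin d)) (hmin : ∀ x, f wstar ≤ f x)
    (ε : ℝ) (hε : 0 ≤ ε) (K : ℕ)
    (w g : ℕ → EuclideanSpace ℝ (Fin d))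
    (hw0 : w 0 = 0)
    (hstep : ∀ k < K, w (k + 1) = w k - (1 / (2 * L)) • g k)
    (hg : ∀ k < K, ‖g k - f' (w k)‖ ≤ ε)
    (hgnorm : ∀ k < K, 4 * ε ≤ ‖g k‖)
    (hgap : ∀ k, 1 ≤ k → k ≤ K → ε * ‖wstar‖ ≤ f (w k) - f wstar) :
    ∀ k ≤ K, ‖w k - wstar‖ ≤ ‖wstar‖ :=
  stmt_9_general f f' hf' hconv L hL hsmooth wstar ε hε K w g hw0 hstep hg hgnorm hgap
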